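/- Fix d ∈ {1,...,9}. With P(d,n) = (1/n)·Σ_{i=1}^{n} c_d(i)/i where c_d(i) is the number of integers in {1,...,i} with decimal leading digit d, the subsequence n ↦ P(d, (d+1)·10^n − 1) converges to β_d = 10·(9 + ln 10 + 9d·ln(1 − 1/(d+1)))/(81(d+1)). -/

import Mathlib

open Finset

/-- The leading (first) decimal digit of a positive integer. -/
def leadingDigit (n : ℕ) : ℕ := n / 10 ^ (Nat.log 10 n)

/-- The number of integers in {1,...,i} whose decimal leading digit equals d. -/
def ldCount (d i : ℕ) : ℕ := ((Finset.Icc 1 i).filter (fun j => leadingDigit j = d)).card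

/-- Probability that the leading digit is d when i is uniform on {1,...,n} and j uniform on {1,...,i}. -/
noncomputable def P (d n : ℕ) : ℝ := (1 / (n : ℝ)) * ∑ i ∈ Finset.Icc 1 n, (ldCount d i : ℝ) / i

open Filter Topology Real

/-!
Swapping the order of summation, `∑_{i ≤ N} c_d(i) / i = ∑_{j ≤ N, ld j = d} (H_N - H_{j-1})`,
and for `N = (d+1)·10^k - 1` the `j ≤ N` with leading digit `d` form the blocks
`[d·10^m, (d+1)·10^m)`, `m ≤ k`. Each block sum has a closed form in harmonic numbers; divided by
the block size `10^m` it tends, for fixed `j = k - m`, to `1 - d log((d+1)/d) + j log 10`, since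
`H_n - log n → γ`. The whole sum divided by `10^k` is thus a geometric average
`∑_j 10^{-j} (block mean)`, and as the block means are `O(1 + j)`, dominated convergence
(Tannery's theorem) gives its limit.
-/

lemma sum_Icc_inv_eq_harmonic_sub {j n : ℕ} (hj : 1 ≤ j) (hjn : j ≤ n + 1) :
    ∑ i ∈ Icc j n, (i : ℝ)⁻¹ = harmonic n - harmonic (j - 1) := by
  obtain ⟨j, rfl⟩ : ∃ j', j = j' + 1 := ⟨j - 1, by omega⟩
  simp only [harmonic_eq_sum_Icc, Rat.cast_sum, Rat.cast_inv, Rat.cast_natCast,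
    add_tsub_cancel_right, Icc_add_one_left_eq_Ioc]
  rw [show Icc 1 n = Ioc 0 n from rfl, show Icc 1 j = Ioc 0 j from rfl,
    ← sum_Ioc_consecutive _ (Nat.zero_le j) (by omega : j ≤ n)]
  ring

lemma harmonic_mono : Monotone harmonic :=
  monotone_nat_of_le_succ fun n => by
    rw [harmonic_succ]; exact le_add_of_nonneg_right (by positivity)

lemma sum_Ico_sub_harmonic (x : ℝ) {a b : ℕ} (hab : a ≤ b) :
    ∑ j ∈ Ico a b, (x - harmonic j) =
      ((b : ℝ) - a) * (x + 1 - harmonic b) - a * (harmonic b - harmonic a) := by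
  induction b, hab using Nat.le_induction with
  | base => simp
  | succ b hab ih =>
    rw [sum_Ico_succ_top hab, ih, harmonic_succ]
    push_cast
    field_simp
    ring

lemma harmonic_pred_sub_le {p q t : ℕ} (hp : 1 ≤ p) (hpq : p ≤ q) (hqt : q ≤ p * t) :
    (harmonic (q - 1) : ℝ) - harmonic (p - 1) ≤ 1 + log t := by
  have hq : (harmonic (q - 1) : ℝ) ≤ 1 + log q :=
    le_trans (mod_cast harmonic_mono (Nat.sub_le q 1)) (harmonic_le_one_add_log q)
  have hp' : log p ≤ harmonic (p - 1) := by
    simpa [Nat.sub_add_cancel hp] using log_add_one_le_harmonic (p - 1)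
  have : log q ≤ log p + log t := by
    have ht : t ≠ 0 := by rintro rfl; rw [mul_zero] at hqt; omega
    rw [← log_mul (by positivity) (by positivity)]
    gcongr
    · exact_mod_cast (by omega : 0 < q)
    · exact_mod_cast hqt
  linarith

lemma tendsto_harmonic_pred_sub_log :
    Tendsto (fun n : ℕ => (harmonic (n - 1) : ℝ) - log n) atTop (𝓝 eulerMascheroniConstant) := by
  refine (tendsto_harmonic_sub_log_add_one.comp (tendsto_sub_atTop_nat 1)).congr' ?_
  filter_upwards [eventually_ge_atTop 1] with n hn
  simp [Nat.cast_sub hn]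

lemma tendsto_harmonic_pred_mul_sub {p q : ℕ} (hp : 1 ≤ p) (hq : 1 ≤ q) :
    Tendsto (fun x : ℕ => (harmonic (q * x - 1) : ℝ) - harmonic (p * x - 1)) atTop
      (𝓝 (log q - log p)) := by
  have hlim (c : ℕ) (hc : 1 ≤ c) := tendsto_harmonic_pred_sub_log.comp
    (tendsto_id.const_mul_atTop' (by omega : 0 < c))
  have := ((hlim q hq).sub (hlim p hp)).add_const (log q - log p)
  rw [sub_self, zero_add] at this
  refine this.congr' ?_
  filter_upwards [eventually_ge_atTop 1] with x hx
  have : (x : ℝ) ≠ 0 := by positivity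
  simp only [Function.comp_apply, id, Nat.cast_mul]
  rw [log_mul (by positivity) this, log_mul (by positivity) this]
  ring

lemma sum_card_filter_Icc_div (p : ℕ → Prop) [DecidablePred p] (n : ℕ) :
    ∑ i ∈ Icc 1 n, (#{j ∈ Icc 1 i | p j} : ℝ) / i =
      ∑ j ∈ Icc 1 n with p j, ((harmonic n : ℝ) - harmonic (j - 1)) := by
  calc ∑ i ∈ Icc 1 n, (#{j ∈ Icc 1 i | p j} : ℝ) / i
      = ∑ i ∈ Icc 1 n, ∑ j ∈ Icc 1 i with p j, (i : ℝ)⁻¹ := by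
        simp [div_eq_mul_inv]
    _ = ∑ j ∈ Icc 1 n with p j, ∑ i ∈ Icc j n, (i : ℝ)⁻¹ := by
        refine sum_comm' fun i j => ?_
        simp only [mem_filter, mem_Icc]
        constructor <;> rintro ⟨⟨h₁, h₂⟩, ⟨h₃, h₄⟩, hp⟩ <;>
          exact ⟨⟨by omega, by omega⟩, ⟨by omega, by omega⟩, hp⟩
    _ = _ := sum_congr rfl fun j hj => by
        obtain ⟨⟨hj₁, hjn⟩, -⟩ := mem_filter.mp hj |>.imp_left mem_Icc.mp
        exact sum_Icc_inv_eq_harmonic_sub hj₁ (by omega)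

lemma tendsto_sum_range_pow_mul {r α β C D : ℝ} (hr₀ : 0 ≤ r) (hr₁ : r < 1) {F : ℕ → ℕ → ℝ}
    (hF : ∀ j, Tendsto (fun k => F k j) atTop (𝓝 (α + β * j)))
    (hbound : ∀ k j, j ≤ k → |F k j| ≤ C + D * j) :
    Tendsto (fun k => ∑ j ∈ range (k + 1), r ^ j * F k j) atTop
      (𝓝 (α / (1 - r) + β * r / (1 - r) ^ 2)) := by
  have hr : ‖r‖ < 1 := by rwa [Real.norm_of_nonneg hr₀]
  have hgeom : Summable (fun j : ℕ => r ^ j) := summable_geometric_of_lt_one hr₀ hr₁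
  have hgeom' : Summable (fun j : ℕ => (j : ℝ) * r ^ j) := by
    simpa using summable_pow_mul_geometric_of_norm_lt_one 1 hr
  set f : ℕ → ℕ → ℝ := fun k j => if j ≤ k then r ^ j * F k j else 0
  have hsum (k : ℕ) : ∑' j, f k j = ∑ j ∈ range (k + 1), r ^ j * F k j := by
    rw [tsum_eq_sum (s := range (k + 1)) fun j hj => if_neg (by simpa [Nat.lt_succ_iff] using hj)]
    exact sum_congr rfl fun j hj => if_pos (Nat.lt_succ_iff.mp (mem_range.mp hj))
  have hlim : Tendsto (fun k => ∑' j, f k j) atTop (𝓝 (∑' j : ℕ, r ^ j * (α + β * j))) := by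
    refine tendsto_tsum_of_dominated_convergence (bound := fun j => r ^ j * (C + D * j))
      ((hgeom.mul_left C).add (hgeom'.mul_left D) |>.congr fun j => by ring) (fun j => ?_) ?_
    · refine ((hF j).const_mul (r ^ j)).congr' ?_
      filter_upwards [eventually_ge_atTop j] with k hk
      simp [f, hk]
    · refine Eventually.of_forall fun k j => ?_
      by_cases hjk : j ≤ k
      · simp only [f, if_pos hjk, norm_mul, norm_pow, Real.norm_of_nonneg hr₀, Real.norm_eq_abs]
        gcongr
        exact hbound k j hjk
      · simp only [f, if_neg hjk, norm_zero]
        exact mul_nonneg (pow_nonneg hr₀ j) ((abs_nonneg _).trans (hbound j j le_rfl))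
  have hval : ∑' j : ℕ, r ^ j * (α + β * j) = α / (1 - r) + β * r / (1 - r) ^ 2 := by
    simp_rw [mul_add, show ∀ j : ℕ, r ^ j * (β * j) = β * (j * r ^ j) from fun j => by ring]
    rw [(hgeom.mul_right α).tsum_add (hgeom'.mul_left β), tsum_mul_right, tsum_mul_left,
      tsum_geometric_of_lt_one hr₀ hr₁, tsum_coe_mul_geometric_of_norm_lt_one hr]
    ring
  simpa only [hsum, hval] using hlim

section LeadingDigit

variable {d : ℕ}

lemma log_ten_eq_of_mem_Ico (hd₁ : 1 ≤ d) (hd₉ : d ≤ 9) {j m : ℕ}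
    (hj : j ∈ Ico (d * 10 ^ m) ((d + 1) * 10 ^ m)) : Nat.log 10 j = m := by
  rw [mem_Ico] at hj
  refine Nat.log_eq_of_pow_le_of_lt_pow ?_ ?_
  · nlinarith
  · rw [pow_succ]; nlinarith

lemma leadingDigit_eq_iff (hd₁ : 1 ≤ d) (hd₉ : d ≤ 9) {j : ℕ} :
    leadingDigit j = d ↔ ∃ m, j ∈ Ico (d * 10 ^ m) ((d + 1) * 10 ^ m) := by
  constructor
  · rintro rfl
    have hpos : 0 < 10 ^ Nat.log 10 j := by positivity
    exact ⟨Nat.log 10 j, mem_Ico.mpr ⟨Nat.div_mul_le_self j _,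
      (Nat.div_lt_iff_lt_mul hpos).mp (Nat.lt_succ_self _)⟩⟩
  · rintro ⟨m, hj⟩
    rw [leadingDigit, log_ten_eq_of_mem_Ico hd₁ hd₉ hj]
    exact Nat.div_eq_of_lt_le (mem_Ico.mp hj).1 (mem_Ico.mp hj).2

lemma filter_leadingDigit_eq (hd₁ : 1 ≤ d) (hd₉ : d ≤ 9) (k : ℕ) :
    {j ∈ Icc 1 ((d + 1) * 10 ^ k - 1) | leadingDigit j = d} =
      (range (k + 1)).biUnion fun m => Ico (d * 10 ^ m) ((d + 1) * 10 ^ m) := by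
  ext j
  simp only [mem_filter, mem_Icc, mem_biUnion, mem_range, leadingDigit_eq_iff hd₁ hd₉]
  constructor
  · rintro ⟨⟨-, hjk⟩, m, hj⟩
    refine ⟨m, Nat.lt_succ_of_le (le_of_not_gt fun hkm => ?_), hj⟩
    have h₁ : 10 ^ k * 10 ≤ 10 ^ m := pow_succ 10 k ▸ Nat.pow_le_pow_right (by norm_num) hkm
    have h₂ : 10 ^ m ≤ d * 10 ^ m := Nat.le_mul_of_pos_left _ hd₁
    have h₃ : (d + 1) * 10 ^ k ≤ 10 * 10 ^ k := Nat.mul_le_mul_right _ (by omega)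
    have h₄ : 0 < (d + 1) * 10 ^ k := by positivity
    rw [mem_Ico] at hj
    have : j < (d + 1) * 10 ^ k := by omega
    linarith
  · rintro ⟨m, hm, hj⟩
    have h₁ : (d + 1) * 10 ^ m ≤ (d + 1) * 10 ^ k :=
      Nat.mul_le_mul_left _ (Nat.pow_le_pow_right (by norm_num) (Nat.lt_succ_iff.mp hm))
    have h₂ : 1 ≤ d * 10 ^ m := Nat.one_le_iff_ne_zero.mpr (by positivity)
    obtain ⟨hj₁, hj₂⟩ := mem_Ico.mp hj
    exact ⟨⟨h₂.trans hj₁, Nat.le_sub_one_of_lt (hj₂.trans_le h₁)⟩, m, hj⟩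

lemma pairwiseDisjoint_digit_blocks (hd₁ : 1 ≤ d) (hd₉ : d ≤ 9) {s : Set ℕ} :
    s.PairwiseDisjoint fun m => Ico (d * 10 ^ m) ((d + 1) * 10 ^ m) :=
  fun _ _ _ _ hne => disjoint_left.mpr fun _ hj hj' =>
    hne ((log_ten_eq_of_mem_Ico hd₁ hd₉ hj).symm.trans
      (log_ten_eq_of_mem_Ico hd₁ hd₉ hj'))

end LeadingDigit

noncomputable def blockMean (d k m : ℕ) : ℝ :=
  (∑ j ∈ Ico (d * 10 ^ m) ((d + 1) * 10 ^ m),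
    ((harmonic ((d + 1) * 10 ^ k - 1) : ℝ) - harmonic (j - 1))) / 10 ^ m

section DigitBlocks

variable {d : ℕ}

lemma sum_ldCount_div_eq (hd₁ : 1 ≤ d) (hd₉ : d ≤ 9) (k : ℕ) :
    ∑ i ∈ Icc 1 ((d + 1) * 10 ^ k - 1), (ldCount d i : ℝ) / i =
      ∑ m ∈ range (k + 1), 10 ^ m * blockMean d k m := by
  refine (sum_card_filter_Icc_div (leadingDigit · = d) _).trans ?_
  rw [filter_leadingDigit_eq hd₁ hd₉,
    sum_biUnion (pairwiseDisjoint_digit_blocks hd₁ hd₉)]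
  exact sum_congr rfl fun m _ => (mul_div_cancel₀ _ (by positivity)).symm

lemma blockMean_eq (hd₁ : 1 ≤ d) (k m : ℕ) :
    blockMean d k m = 1 + ((harmonic ((d + 1) * 10 ^ k - 1) : ℝ) - harmonic ((d + 1) * 10 ^ m - 1))
      - (d - (10 : ℝ)⁻¹ ^ m) * (harmonic ((d + 1) * 10 ^ m - 1) - harmonic (d * 10 ^ m - 1)) := by
  have ha : 1 ≤ d * 10 ^ m := Nat.one_le_iff_ne_zero.mpr (by positivity)
  have hab : d * 10 ^ m ≤ (d + 1) * 10 ^ m := Nat.mul_le_mul_right _ (by omega : d ≤ d + 1)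
  rw [blockMean, ← Nat.sub_add_cancel ha, ← Nat.sub_add_cancel (ha.trans hab), ← sum_Ico_add']
  simp only [add_tsub_cancel_right]
  rw [sum_Ico_sub_harmonic _ (Nat.sub_le_sub_right hab 1)]
  push_cast [Nat.cast_sub ha, Nat.cast_sub (ha.trans hab), inv_pow]
  field_simp
  ring

lemma abs_blockMean_le (hd₁ : 1 ≤ d) (hd₉ : d ≤ 9) {k m : ℕ} (hmk : m ≤ k) :
    |blockMean d k m| ≤ 20 + log 10 * (k - m : ℕ) := by
  have hpos : 1 ≤ (d + 1) * 10 ^ m := Nat.one_le_iff_ne_zero.mpr (by positivity)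
  have hdpos : 1 ≤ d * 10 ^ m := Nat.one_le_iff_ne_zero.mpr (by positivity)
  have hu := harmonic_pred_sub_le hpos
    (Nat.mul_le_mul_left _ (Nat.pow_le_pow_right (by norm_num) hmk)) (t := 10 ^ (k - m))
    (by rw [mul_assoc, ← pow_add, Nat.add_sub_cancel' hmk])
  have hw := harmonic_pred_sub_le hdpos (Nat.mul_le_mul_right _ (by omega : d ≤ d + 1)) (t := 2)
    (by nlinarith)
  have hu₀ : (0 : ℝ) ≤ harmonic ((d + 1) * 10 ^ k - 1) - harmonic ((d + 1) * 10 ^ m - 1) :=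
    sub_nonneg.mpr (mod_cast harmonic_mono (Nat.sub_le_sub_right
      (Nat.mul_le_mul_left _ (Nat.pow_le_pow_right (by norm_num) hmk)) 1))
  have hw₀ : (0 : ℝ) ≤ harmonic ((d + 1) * 10 ^ m - 1) - harmonic (d * 10 ^ m - 1) :=
    sub_nonneg.mpr (mod_cast harmonic_mono (Nat.sub_le_sub_right
      (Nat.mul_le_mul_right _ (by omega : d ≤ d + 1)) 1))
  have hv₀ : 0 ≤ (d : ℝ) - 10⁻¹ ^ m := by
    have : (10 : ℝ)⁻¹ ^ m ≤ 1 := pow_le_one₀ (by norm_num) (by norm_num)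
    have : (1 : ℝ) ≤ d := mod_cast hd₁
    linarith
  have hv : (d : ℝ) - 10⁻¹ ^ m ≤ 9 := by
    have : (d : ℝ) ≤ 9 := mod_cast hd₉
    linarith [pow_nonneg (by norm_num : (0 : ℝ) ≤ 10⁻¹) m]
  have hw₂ : harmonic ((d + 1) * 10 ^ m - 1) - (harmonic (d * 10 ^ m - 1) : ℝ) ≤ 2 := by
    push_cast at hw
    linarith [log_two_lt_d9]
  have hvw := mul_le_mul hv hw₂ hw₀ (by norm_num)
  rw [Nat.cast_pow, log_pow, Nat.cast_ofNat] at hu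
  rw [blockMean_eq hd₁, abs_le]
  constructor <;> nlinarith [mul_nonneg hv₀ hw₀]

lemma tendsto_blockMean (hd₁ : 1 ≤ d) (j : ℕ) :
    Tendsto (fun k => blockMean d k (k - j)) atTop
      (𝓝 (1 - d * (log (d + 1) - log d) + log 10 * j)) := by
  have hx : Tendsto (fun k => 10 ^ (k - j)) atTop atTop :=
    (tendsto_pow_atTop_atTop_of_one_lt (by norm_num)).comp (tendsto_sub_atTop_nat j)
  have hu := (tendsto_harmonic_pred_mul_sub (p := d + 1) (q := (d + 1) * 10 ^ j) (by omega)
    (Nat.one_le_iff_ne_zero.mpr (by positivity))).comp hx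
  have hw := (tendsto_harmonic_pred_mul_sub (p := d) (q := d + 1) hd₁ (by omega)).comp hx
  have hv : Tendsto (fun k => (10 : ℝ)⁻¹ ^ (k - j)) atTop (𝓝 0) :=
    (tendsto_pow_atTop_nhds_zero_of_lt_one (by norm_num) (by norm_num)).comp
      (tendsto_sub_atTop_nat j)
  have hlim := ((hu.const_add 1).sub ((tendsto_const_nhds (x := (d : ℝ))).sub hv |>.mul hw))
  convert hlim.congr' ?_ using 2
  · have : (d + 1 : ℝ) ≠ 0 := by positivity
    push_cast
    rw [log_mul this (by positivity), log_pow]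
    ring
  · filter_upwards [eventually_ge_atTop j] with k hk
    simp only [Function.comp_apply, blockMean_eq hd₁, mul_assoc, ← pow_add, Nat.add_sub_cancel' hk]


lemma tendsto_sum_ldCount_div (hd₁ : 1 ≤ d) (hd₉ : d ≤ 9) :
    Tendsto (fun k => (∑ i ∈ Icc 1 ((d + 1) * 10 ^ k - 1), (ldCount d i : ℝ) / i) / 10 ^ k) atTop
      (𝓝 (10 / 9 * (1 - d * (log (d + 1) - log d)) + 10 / 81 * log 10)) := by
  have h := tendsto_sum_range_pow_mul (r := 10⁻¹) (C := 20) (by norm_num) (by norm_num)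
    (tendsto_blockMean hd₁) fun k j hjk => by
      simpa [Nat.sub_sub_self hjk] using abs_blockMean_le hd₁ hd₉ (Nat.sub_le k j)
  convert h using 2 with k
  · rw [sum_ldCount_div_eq hd₁ hd₉, sum_div, ← sum_range_reflect]
    refine sum_congr rfl fun j hj => ?_
    have hjk : j ≤ k := Nat.lt_succ_iff.mp (mem_range.mp hj)
    rw [Nat.add_sub_cancel, inv_pow, ← Nat.sub_add_cancel hjk, pow_add, Nat.add_sub_cancel]
    field_simp
  · norm_num
    ring

end DigitBlocks

theorem tendsto_P_psi (d : ℕ) (hd : d ∈ Finset.Icc 1 9) :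
    Filter.Tendsto (fun n : ℕ => P d ((d + 1) * 10 ^ n - 1)) Filter.atTop
      (nhds (10 * (9 + Real.log 10 + 9 * (d : ℝ) * Real.log (1 - 1 / ((d : ℝ) + 1))) /
        (81 * ((d : ℝ) + 1)))) := by
  obtain ⟨hd₁, hd₉⟩ := mem_Icc.mp hd
  have hN : Tendsto (fun k : ℕ => (((d + 1) * 10 ^ k - 1 : ℕ) : ℝ) / 10 ^ k) atTop
      (𝓝 (d + 1)) := by
    have := (tendsto_pow_atTop_nhds_zero_of_lt_one (r := (10 : ℝ)⁻¹) (by norm_num)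
      (by norm_num)).const_sub ((d : ℝ) + 1)
    rw [sub_zero] at this
    refine this.congr fun k => ?_
    rw [Nat.cast_sub (Nat.one_le_iff_ne_zero.mpr (by positivity)), inv_pow]
    push_cast
    field_simp
  convert (tendsto_sum_ldCount_div hd₁ hd₉).div hN (by positivity) using 2 with k
  · rw [Pi.div_apply, P, one_div_mul_eq_div,
      div_div_div_cancel_right₀ (pow_ne_zero k (by norm_num : (10 : ℝ) ≠ 0))]
  · have hd₀ : (0 : ℝ) < d := by exact_mod_cast hd₁
    rw [one_sub_div (by positivity), add_sub_cancel_right, log_div hd₀.ne' (by positivity)]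
    field_simp
    ring
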